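/- arXiv:1702.06439 — 2 statements merged into one kernel-verified Lean document; each statement's English description precedes it below -/
import Mathlib

section
/- For every player p, every history h, every randomised move α of player p at last(h), every action a ∈ Supp(α), and every semantics ⋆ ∈ {S, A}: α ⪯^⋆_h a, i.e., α is ⋆-weakly dominated at h by the Dirac move on a. -/
open scoped Classical

noncomputable section

/-- Run of a deterministic automaton along an infinite word. -/
def autRun {α Q : Type} (q0 : Q) (d : Q → α → Q) (ρ : ℕ → α) : ℕ → Q
  | 0 => q0
  | k + 1 => d (autRun q0 d ρ k) (ρ k)

/-- A concurrent game played on a finite graph. -/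
structure ConcGame where
  S : Type
  A : Type
  P : Type
  [fS : Fintype S]
  [fA : Fintype A]
  [fP : Fintype P]
  [dS : DecidableEq S]
  [dA : DecidableEq A]
  [dP : DecidableEq P]
  init : S
  act : P → S → Set A
  act_nonempty : ∀ p s, (act p s).Nonempty
  tr : S → (P → A) → S

open MeasureTheory

namespace ConcGame

attribute [instance] ConcGame.fS ConcGame.fA ConcGame.fP ConcGame.dS ConcGame.dA ConcGame.dP

inductive Sem where
  | Sure : Sem
  | Almost : Sem

variable (G : ConcGame)

instance : MeasurableSpace G.S := ⊤

/-- Randomised move of player `p` at state `s`: a probability distribution on `act p s`. -/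
def Mixed (p : G.P) (s : G.S) : Type :=
  { f : G.A → ℝ // (∀ a, 0 ≤ f a) ∧ (∑ a, f a) = 1 ∧ ∀ a, f a ≠ 0 → a ∈ G.act p s }

/-- Support of a randomised move. -/
def Supp {p : G.P} {s : G.S} (α : G.Mixed p s) : Set G.A := { a | α.1 a ≠ 0 }

/-- A randomised move is Dirac if it puts all mass on one action. -/
def IsDirac {p : G.P} {s : G.S} (α : G.Mixed p s) : Prop := ∃ a, α.1 a = 1

/-- The Dirac move on action `a`. -/
def dirac (p : G.P) (s : G.S) (a : G.A) (ha : a ∈ G.act p s) : G.Mixed p s :=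
  ⟨fun b => if b = a then 1 else 0, by
    refine ⟨fun b => ?_, ?_, fun b hb => ?_⟩
    · by_cases h : b = a <;> simp [h]
    · simp
    · by_cases h : b = a
      · subst h; exact ha
      · simp [h] at hb⟩

/-- The last state of a history (the initial state for the empty list). -/
def lastS (l : List G.S) : G.S := l.getLast?.getD G.init

/-- One step of the game graph. -/
def Step (s s' : G.S) : Prop :=
  ∃ m : G.P → G.A, (∀ p, m p ∈ G.act p s) ∧ G.tr s m = s'

/-- Histories: finite paths starting at the initial state. -/
def IsHistory (l : List G.S) : Prop := l.head? = some G.init ∧ l.Chain' G.Step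

/-- Runs: infinite sequences of states. -/
abbrev Run : Type := ℕ → G.S

/-- A strategy of player `p`: maps each history to a randomised move at its last state. -/
def Strategy (p : G.P) : Type := (l : List G.S) → G.Mixed p (G.lastS l)

/-- A profile of strategies, one per player. -/
def Profile : Type := ∀ p : G.P, G.Strategy p

/-- A strategy for the coalition `-p` of all players other than `p`. -/
def CoStrategy (p : G.P) : Type := ∀ q : G.P, q ≠ p → G.Strategy q

/-- Combining a strategy of `p` with a coalition strategy of `-p` into a profile. -/
def combine {p : G.P} (σ : G.Strategy p) (τ : G.CoStrategy p) : G.Profile :=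
  fun q => if h : q = p then (by subst h; exact σ) else τ q h

/-- One-step transition probability when each player independently samples its move. -/
def stepProb (s : G.S) (β : G.P → G.A → ℝ) (s' : G.S) : ℝ :=
  ∑ m ∈ Finset.univ.filter (fun m : G.P → G.A => G.tr s m = s'), ∏ p, β p (m p)

/-- Probability of the cylinder of a history under a profile. -/
def cylProb (σv : G.Profile) (l : List G.S) : ℝ :=
  ∏ i ∈ Finset.range (l.length - 1),
    G.stepProb (G.lastS (l.take (i + 1))) (fun p => (σv p (l.take (i + 1))).1)
      (G.lastS (l.take (i + 2)))

/-- The cylinder of a finite word: runs having it as a prefix. -/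
def Cyl (l : List G.S) : Set G.Run := { ρ | ∀ i, i < l.length → ρ i = l.getD i G.init }

/-- Histories with positive probability under a profile. -/
def HistOf (σv : G.Profile) : Set (List G.S) :=
  { l | G.IsHistory l ∧ 0 < G.cylProb σv l }

/-- The prefix of length `k+1` of a run. -/
def prefixList (ρ : G.Run) (k : ℕ) : List G.S := (List.range (k + 1)).map ρ

/-- Outcome of a profile: runs all of whose prefixes have positive probability. -/
def Outcome (σv : G.Profile) : Set G.Run := { ρ | ∀ k, G.prefixList ρ k ∈ G.HistOf σv }

/-- Histories compatible with a single strategy of player `p`. -/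
def HistOfS {p : G.P} (σ : G.Strategy p) : Set (List G.S) :=
  ⋃ τ : G.CoStrategy p, G.HistOf (G.combine σ τ)

/-- `Pr` assigns to every profile a probability measure on runs which agrees with the
    inductively defined cylinder probabilities. -/
def ValidPr (Pr : G.Profile → Measure G.Run) : Prop :=
  (∀ σv, IsProbabilityMeasure (Pr σv)) ∧
    ∀ σv l, G.IsHistory l → Pr σv (G.Cyl l) = ENNReal.ofReal (G.cylProb σv l)

/-- A profile wins a condition under the sure / almost-sure semantics. -/
def Wins (Pr : G.Profile → Measure G.Run) : Sem → G.Profile → Set G.Run → Prop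
  | Sem.Sure, σv, Φ => G.Outcome σv ⊆ Φ
  | Sem.Almost, σv, Φ => Pr σv Φ = 1

/-- A profile wins a condition from a given history, under each semantics. -/
def WinsFrom (Pr : G.Profile → Measure G.Run) : Sem → G.Profile → Set G.Run → List G.S → Prop
  | Sem.Sure, σv, Φ, l => G.Outcome σv ∩ G.Cyl l ⊆ Φ
  | Sem.Almost, σv, Φ, l => l ∈ G.HistOf σv ∧ Pr σv (Φ ∩ G.Cyl l) / Pr σv (G.Cyl l) = 1

/-- A strategy of `p` is winning if it wins against every coalition strategy. -/
def StratWins (Pr : G.Profile → Measure G.Run) (st : Sem) {p : G.P} (σ : G.Strategy p)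
    (Φ : Set G.Run) : Prop :=
  ∀ τ : G.CoStrategy p, G.Wins Pr st (G.combine σ τ) Φ

/-- A strategy of `p` is winning from a history `l`. -/
def StratWinsFrom (Pr : G.Profile → Measure G.Run) (st : Sem) {p : G.P} (σ : G.Strategy p)
    (Φ : Set G.Run) (l : List G.S) : Prop :=
  ∀ τ : G.CoStrategy p, G.WinsFrom Pr st (G.combine σ τ) Φ l

/-- Weak dominance between strategies of player `p`. -/
def WDom (Pr : G.Profile → Measure G.Run) (win : G.P → Set G.Run) (st : Sem) {p : G.P}
    (σ σ' : G.Strategy p) : Prop :=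
  ∀ τ : G.CoStrategy p,
    G.Wins Pr st (G.combine σ τ) (win p) → G.Wins Pr st (G.combine σ' τ) (win p)

/-- Strict dominance between strategies. -/
def SDom (Pr : G.Profile → Measure G.Run) (win : G.P → Set G.Run) (st : Sem) {p : G.P}
    (σ σ' : G.Strategy p) : Prop :=
  G.WDom Pr win st σ σ' ∧ ¬ G.WDom Pr win st σ' σ

/-- Equivalence of strategies. -/
def EquivS (Pr : G.Profile → Measure G.Run) (win : G.P → Set G.Run) (st : Sem) {p : G.P}
    (σ σ' : G.Strategy p) : Prop :=
  G.WDom Pr win st σ σ' ∧ G.WDom Pr win st σ' σ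

/-- A strategy is admissible iff it is not dominated. -/
def Admissible (Pr : G.Profile → Measure G.Run) (win : G.P → Set G.Run) (st : Sem) {p : G.P}
    (σ : G.Strategy p) : Prop :=
  ∀ σ' : G.Strategy p, ¬ G.SDom Pr win st σ σ'

/-- Weak dominance between randomised moves at a history. -/
def MWDom (Pr : G.Profile → Measure G.Run) (win : G.P → Set G.Run) (st : Sem) {p : G.P}
    (l : List G.S) (α α' : G.Mixed p (G.lastS l)) : Prop :=
  ∀ σ : G.Strategy p, l ∈ G.HistOfS σ → σ l = α →
    ∃ σ' : G.Strategy p, σ' l = α' ∧ G.WDom Pr win st σ σ'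

/-- Equivalence of moves at a history. -/
def MEquiv (Pr : G.Profile → Measure G.Run) (win : G.P → Set G.Run) (st : Sem) {p : G.P}
    (l : List G.S) (α α' : G.Mixed p (G.lastS l)) : Prop :=
  G.MWDom Pr win st l α α' ∧ G.MWDom Pr win st l α' α

/-- Strict dominance between moves at a history. -/
def MSDom (Pr : G.Profile → Measure G.Run) (win : G.P → Set G.Run) (st : Sem) {p : G.P}
    (l : List G.S) (α α' : G.Mixed p (G.lastS l)) : Prop :=
  G.MWDom Pr win st l α α' ∧ ¬ G.MWDom Pr win st l α' α

/-- A move is admissible at a history iff no move dominates it there. -/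
def MAdmissible (Pr : G.Profile → Measure G.Run) (win : G.P → Set G.Run) (st : Sem) {p : G.P}
    (l : List G.S) (α : G.Mixed p (G.lastS l)) : Prop :=
  ∀ α' : G.Mixed p (G.lastS l), ¬ G.MSDom Pr win st l α α'

/-- A strategy is locally admissible (LA) iff it plays admissible moves at every history. -/
def LA (Pr : G.Profile → Measure G.Run) (win : G.P → Set G.Run) (st : Sem) {p : G.P}
    (σ : G.Strategy p) : Prop :=
  ∀ l, G.IsHistory l → G.MAdmissible Pr win st l (σ l)

/-- The value of a history w.r.t. a strategy: 1 if winning from it, 0 if the coalition can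
    both let the strategy win and make it lose, -1 otherwise. -/
def ValStrat (Pr : G.Profile → Measure G.Run) (win : G.P → Set G.Run) (st : Sem) {p : G.P}
    (l : List G.S) (σ : G.Strategy p) : ℤ :=
  if G.StratWinsFrom Pr st σ (win p) l then 1
  else if (∃ τ : G.CoStrategy p, G.WinsFrom Pr st (G.combine σ τ) (win p) l) then 0
  else -1

/-- The value of a history for player `p`: the best value over the player's strategies. -/
def ValH (Pr : G.Profile → Measure G.Run) (win : G.P → Set G.Run) (st : Sem) (p : G.P)
    (l : List G.S) : ℤ :=
  if (∃ σ : G.Strategy p, G.ValStrat Pr win st l σ = 1) then 1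
  else if (∃ σ : G.Strategy p, G.ValStrat Pr win st l σ = 0) then 0
  else -1

/-- Strongly cooperative optimal strategies. -/
def SCO (Pr : G.Profile → Measure G.Run) (win : G.P → Set G.Run) (st : Sem) {p : G.P}
    (σ : G.Strategy p) : Prop :=
  ∀ l ∈ G.HistOfS σ, G.ValStrat Pr win st l σ = G.ValH Pr win st p l

/-- The full action tuple obtained from `a` for `p` and `c` for the coalition. -/
def combAct {p : G.P} (a : G.A) (c : ∀ q : G.P, q ≠ p → G.A) : G.P → G.A :=
  fun q => if h : q = p then (by subst h; exact a) else c q h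

/-- The tuple of one-step distributions obtained from a move of `p` and coalition moves. -/
def combMix {p : G.P} {s : G.S} (α : G.Mixed p s) (γ : ∀ q : G.P, q ≠ p → G.Mixed q s) :
    G.P → G.A → ℝ :=
  fun q => if h : q = p then (by subst h; exact α.1) else (γ q h).1

/-- Simple safety games: each player loses exactly the runs visiting its bad states, and
    bad states are closed under steps. -/
def SimpleSafety (win : G.P → Set G.Run) : Prop :=
  ∃ Bad : G.P → Set G.S,
    (∀ p, win p = { ρ : G.Run | ∀ i, ρ i ∉ Bad p }) ∧
    ∀ p s, s ∈ Bad p → ∀ s', G.Step s s' → s' ∈ Bad p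

/-- Prefix-independent winning conditions. -/
def PrefIndep (Φ : Set G.Run) : Prop :=
  ∀ (ρ : G.Run) (k : ℕ), ρ ∈ Φ ↔ (fun i => ρ (i + k)) ∈ Φ

/-- `stf` and `plf` give the unique state and player where each action is available. -/
def UniqueAvail (stf : G.A → G.S) (plf : G.A → G.P) : Prop :=
  ∀ (q : G.P) (s : G.S) (a : G.A), a ∈ G.act q s → plf a = q ∧ stf a = s

/-- An action of player `q` is ⋆-LA if its Dirac move is admissible at every history where
    it is available. -/
def LAAct (Pr : G.Profile → Measure G.Run) (win : G.P → Set G.Run) (st : Sem)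
    (q : G.P) (a : G.A) : Prop :=
  ∀ (l : List G.S) (_ : G.IsHistory l) (ha : a ∈ G.act q (G.lastS l)),
    G.MAdmissible Pr win st l (G.dirac q (G.lastS l) a ha)

/-- Current `S`-component of a history of the derived game. -/
def dCur (l : List (G.S × (G.P → G.A))) : G.S := (l.getLast?.map Prod.fst).getD G.init

/-- Legal joint action in the derived game: available and ⋆-LA for every player. -/
def DLegal (Pr : G.Profile → Measure G.Run) (win : G.P → Set G.Run) (st : Sem)
    (s : G.S) (m : G.P → G.A) : Prop :=
  ∀ q, m q ∈ G.act q s ∧ G.LAAct Pr win st q (m q)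

/-- Histories of the derived game `G⋆_p` (the part after the initial state). -/
def IsDHistory (Pr : G.Profile → Measure G.Run) (win : G.P → Set G.Run) (st : Sem)
    (l : List (G.S × (G.P → G.A))) : Prop :=
  ∀ i (hi : i < l.length),
    G.DLegal Pr win st (G.dCur (l.take i)) (l.get ⟨i, hi⟩).2 ∧
    (l.get ⟨i, hi⟩).1 = G.tr (G.dCur (l.take i)) (l.get ⟨i, hi⟩).2

/-- Observation of a derived history: the projection to states. -/
def oHist (l : List (G.S × (G.P → G.A))) : List G.S := G.init :: l.map Prod.fst

/-- Observation-based Dirac strategies of player `p` in the derived game. -/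
def IsDStrategy (Pr : G.Profile → Measure G.Run) (win : G.P → Set G.Run) (st : Sem)
    (p : G.P) (σb : List (G.S × (G.P → G.A)) → G.A) : Prop :=
  (∀ l, G.IsDHistory Pr win st l → σb l ∈ G.act p (G.dCur l) ∧ G.LAAct Pr win st p (σb l)) ∧
  (∀ l l', G.oHist l = G.oHist l' → σb l = σb l')

/-- `σb` is a realisation of the strategy `σ` in the derived game. -/
def IsRealisation (Pr : G.Profile → Measure G.Run) (win : G.P → Set G.Run) (st : Sem)
    (p : G.P) (σ : G.Strategy p) (σb : List (G.S × (G.P → G.A)) → G.A) : Prop :=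
  G.IsDStrategy Pr win st p σb ∧
  ∀ l, G.IsDHistory Pr win st l → σb l ∈ G.Supp (σ (G.oHist l))

/-- The prefix of length `k` of a derived run. -/
def dPrefix (ρb : ℕ → G.S × (G.P → G.A)) (k : ℕ) : List (G.S × (G.P → G.A)) :=
  (List.range k).map ρb

/-- Outcome of a player-`p` strategy in the derived game: all derived runs consistent with
    it in which all players play legal ⋆-LA Dirac actions. -/
def DOutcome (Pr : G.Profile → Measure G.Run) (win : G.P → Set G.Run) (st : Sem)
    (p : G.P) (σb : List (G.S × (G.P → G.A)) → G.A) : Set (ℕ → G.S × (G.P → G.A)) :=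
  { ρb | ∀ k,
      G.DLegal Pr win st (G.dCur (G.dPrefix ρb k)) (ρb k).2 ∧
      (ρb k).2 p = σb (G.dPrefix ρb k) ∧
      (ρb k).1 = G.tr (G.dCur (G.dPrefix ρb k)) (ρb k).2 }

/-- Observation of a derived run: the induced run of `G`. -/
def oRun (ρb : ℕ → G.S × (G.P → G.A)) : G.Run :=
  fun k => match k with
  | 0 => G.init
  | Nat.succ n => (ρb n).1

/-- Value of a state for player `q` (well defined for prefix-independent conditions). -/
def ValSt (Pr : G.Profile → Measure G.Run) (win : G.P → Set G.Run) (st : Sem)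
    (q : G.P) (s : G.S) : ℤ :=
  if (∃ l, G.IsHistory l ∧ G.lastS l = s ∧ G.ValH Pr win st q l = 1) then 1
  else if (∃ l, G.IsHistory l ∧ G.lastS l = s ∧ G.ValH Pr win st q l = 0) then 0
  else -1

/-- States of the derived game where player `q` has value 0 but another choice of the
    coalition could have helped `q`. -/
def Help (Pr : G.Profile → Measure G.Run) (win : G.P → Set G.Run) (st : Sem)
    (stf : G.A → G.S) (q : G.P) : Set (G.S × (G.P → G.A)) :=
  { x | G.ValSt Pr win st q x.1 = 0 ∧
      ∃ c : ∀ r : G.P, r ≠ q → G.A, (∀ r hr, c r hr ∈ G.act r (stf (x.2 q))) ∧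
        0 ≤ G.ValSt Pr win st q (G.tr (stf (x.2 q)) (G.combAct (x.2 q) c)) ∧
        G.tr (stf (x.2 q)) (G.combAct (x.2 q) c) ≠ x.1 }

/-- The formula φ⁰_q evaluated on a derived run. -/
def phi0 (Pr : G.Profile → Measure G.Run) (win : G.P → Set G.Run) (st : Sem)
    (stf : G.A → G.S) (q : G.P) (ρb : ℕ → G.S × (G.P → G.A)) : Prop :=
  (∃ k, G.ValSt Pr win st q (G.oRun ρb k) ≠ 0) ∨
  (G.oRun ρb ∈ win q) ∨
  (∀ k, ∃ j, k ≤ j ∧ ρb j ∈ G.Help Pr win st stf q)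

/-- The formula φ¹_q evaluated on a derived run. -/
def phi1 (Pr : G.Profile → Measure G.Run) (win : G.P → Set G.Run) (st : Sem)
    (q : G.P) (ρb : ℕ → G.S × (G.P → G.A)) : Prop :=
  (∃ k, G.ValSt Pr win st q (G.oRun ρb k) = 1) → G.oRun ρb ∈ win q

/-- ω-regular sets of runs: recognised by a deterministic finite parity automaton. -/
def IsOmegaRegular (Φ : Set G.Run) : Prop :=
  ∃ (Q : Type) (_ : Fintype Q) (q0 : Q) (d : Q → G.S → Q) (c : Q → ℕ),
    Φ = { ρ : G.Run | ∃ n, Even n ∧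
      Set.Infinite { k | c (autRun q0 d ρ k) = n } ∧
      ∀ m, Set.Infinite { k | c (autRun q0 d ρ k) = m } → n ≤ m }

/-- Finite-memory strategies: realised by a finite stochastic Moore machine. -/
def FiniteMemory {p : G.P} (σ : G.Strategy p) : Prop :=
  ∃ (M : Type) (_ : Fintype M) (m0 : M) (upd : M → G.S → M)
    (out : M → (s : G.S) → G.Mixed p s),
    ∀ l : List G.S, σ l = out (l.foldl upd m0) (G.lastS l)

end ConcGame

/-! Write `α = c · δ_a + (1 - c) · β` with `c = α(a) > 0`. Replacing `α` by `δ_a` at the history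
splits the law of every profile into `c` times the law with `δ_a` plus `1 - c` times the law
with `β`, so every history of positive probability with `δ_a` has positive probability with
`α` (sure semantics), and a winning set of probability one with `α` has probability one with
`δ_a` (almost-sure semantics). -/

lemma Finset.prod_eq_mix_of_eq_off {ι : Type*} [DecidableEq ι] (s : Finset ι)
    {f g h : ι → ℝ} {c d : ℝ} (hcd : c + d = 1) (i₀ : ι)
    (hmix : f i₀ = c * g i₀ + d * h i₀) (hoff : ∀ i ∈ s, i ≠ i₀ → g i = f i ∧ h i = f i) :
    ∏ i ∈ s, f i = c * ∏ i ∈ s, g i + d * ∏ i ∈ s, h i := by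
  have hrest : ∀ t ⊆ s, i₀ ∉ t → ∏ i ∈ t, g i = ∏ i ∈ t, f i ∧ ∏ i ∈ t, h i = ∏ i ∈ t, f i := by
    intro t hts hi₀
    have hoff' : ∀ i ∈ t, g i = f i ∧ h i = f i :=
      fun i hi => hoff i (hts hi) (ne_of_mem_of_not_mem hi hi₀)
    exact ⟨Finset.prod_congr rfl fun i hi => (hoff' i hi).1,
      Finset.prod_congr rfl fun i hi => (hoff' i hi).2⟩
  by_cases hi₀ : i₀ ∈ s
  · obtain ⟨hg, hh⟩ := hrest _ (Finset.erase_subset i₀ s) (Finset.notMem_erase i₀ s)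
    rw [← Finset.mul_prod_erase s f hi₀, ← Finset.mul_prod_erase s g hi₀,
      ← Finset.mul_prod_erase s h hi₀, hg, hh, hmix]
    ring
  · obtain ⟨hg, hh⟩ := hrest s subset_rfl hi₀
    rw [hg, hh, ← add_mul, hcd, one_mul]

lemma MeasureTheory.Measure.apply_eq_one_of_smul_add_apply_eq_one {α : Type*}
    [MeasurableSpace α] {μ ν : Measure α} [IsProbabilityMeasure μ] [IsProbabilityMeasure ν]
    {a b : ENNReal} (ha : a ≠ 0) (hab : a + b = 1) {s : Set α} (h : (a • μ + b • ν) s = 1) :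
    μ s = 1 := by
  by_contra hne
  have ha_top : a ≠ ⊤ := ne_top_of_le_ne_top ENNReal.one_ne_top (hab ▸ le_self_add)
  have hb_top : b ≠ ⊤ := ne_top_of_le_ne_top ENNReal.one_ne_top (hab ▸ le_add_self)
  have hlt : (a • μ + b • ν) s < 1 := calc
    (a • μ + b • ν) s = a * μ s + b * ν s := by simp
    _ < a * 1 + b * 1 :=
      ENNReal.add_lt_add_of_lt_of_le (ENNReal.mul_ne_top hb_top (measure_ne_top ν s))
        (ENNReal.mul_lt_mul_right ha ha_top (prob_le_one.lt_of_ne hne))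
        (mul_le_mul_right prob_le_one b)
    _ = 1 := by rw [mul_one, mul_one, hab]
  exact hlt.ne h

namespace ConcGame

variable {G : ConcGame}

section Strategy

variable {p : G.P}

def Strategy.update (σ : G.Strategy p) (l : List G.S) (β : G.Mixed p (G.lastS l)) :
    G.Strategy p :=
  fun l' => if h : l' = l then h ▸ β else σ l'

@[simp]
lemma Strategy.update_self (σ : G.Strategy p) (l : List G.S) (β : G.Mixed p (G.lastS l)) :
    σ.update l β l = β := by
  simp [Strategy.update]

lemma Strategy.update_of_ne (σ : G.Strategy p) {l l' : List G.S} (β : G.Mixed p (G.lastS l))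
    (h : l' ≠ l) : σ.update l β l' = σ l' := by
  simp [Strategy.update, h]

@[simp]
lemma combine_self (σ : G.Strategy p) (τ : G.CoStrategy p) : G.combine σ τ p = σ := by
  simp [combine]

lemma combine_of_ne (σ : G.Strategy p) (τ : G.CoStrategy p) {q : G.P} (h : q ≠ p) :
    G.combine σ τ q = τ q h := by
  simp [combine, h]

end Strategy

namespace Mixed

variable {p : G.P} {s : G.S}

lemma apply_le_one (α : G.Mixed p s) (a : G.A) : α.1 a ≤ 1 := by
  simpa [α.2.2.1] using
    Finset.single_le_sum (f := α.1) (fun b _ => α.2.1 b) (Finset.mem_univ a)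

lemma apply_eq_zero_of_apply_eq_one (α : G.Mixed p s) {a b : G.A} (ha : α.1 a = 1)
    (hb : b ≠ a) : α.1 b = 0 := by
  have hsum := α.2.2.1
  rw [← Finset.add_sum_erase _ _ (Finset.mem_univ a), ha, add_eq_left,
    Finset.sum_eq_zero_iff_of_nonneg fun x _ => α.2.1 x] at hsum
  exact hsum b (Finset.mem_erase.2 ⟨hb, Finset.mem_univ b⟩)

lemma exists_eq_dirac_mix (α : G.Mixed p s) {a : G.A} (ha : a ∈ G.Supp α) :
    ∃ β : G.Mixed p s, ∀ b,
      α.1 b = α.1 a * (G.dirac p s a (α.2.2.2 a ha)).1 b + (1 - α.1 a) * β.1 b := by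
  change ∃ β : G.Mixed p s, ∀ b,
    α.1 b = α.1 a * (if b = a then 1 else 0) + (1 - α.1 a) * β.1 b
  rcases (apply_le_one α a).eq_or_lt with h1 | hlt
  · refine ⟨α, fun b => ?_⟩
    by_cases hb : b = a
    · subst hb; simp [h1]
    · simp [hb, h1, apply_eq_zero_of_apply_eq_one α h1 hb]
  have hpos : 0 < 1 - α.1 a := sub_pos.2 hlt
  refine ⟨⟨fun b => (α.1 b - α.1 a * (if b = a then 1 else 0)) / (1 - α.1 a),
    fun b => div_nonneg ?_ hpos.le, ?_, fun b hb => ?_⟩, fun b => ?_⟩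
  · by_cases hb : b = a
    · simp [hb]
    · simpa [hb] using α.2.1 b
  · rw [← Finset.sum_div, Finset.sum_sub_distrib, α.2.2.1, ← Finset.mul_sum]
    simpa using div_self hpos.ne'
  · by_cases hba : b = a
    · exact hba ▸ α.2.2.2 a ha
    · exact α.2.2.2 b fun h0 => hb (by simp [h0, hba])
  · field_simp
    ring

end Mixed

section StepProb

variable {s : G.S} {β : G.P → G.A → ℝ}

lemma stepProb_nonneg (hβ : ∀ q b, 0 ≤ β q b) (s' : G.S) : 0 ≤ G.stepProb s β s' :=
  Finset.sum_nonneg fun m _ => Finset.prod_nonneg fun q _ => hβ q (m q)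

lemma sum_stepProb (hβ : ∀ q, ∑ b, β q b = 1) : ∑ s', G.stepProb s β s' = 1 := by
  simp only [stepProb]
  rw [Finset.sum_fiberwise, ← Fintype.piFinset_univ, ← Finset.prod_univ_sum]
  simp [hβ]

lemma step_of_stepProb_ne_zero (hβ : ∀ q b, β q b ≠ 0 → b ∈ G.act q s) {s' : G.S}
    (h : G.stepProb s β s' ≠ 0) : G.Step s s' := by
  obtain ⟨m, hm, hne⟩ := Finset.exists_ne_zero_of_sum_ne_zero h
  exact ⟨m, fun q => hβ q (m q) fun h0 => hne (Finset.prod_eq_zero (Finset.mem_univ q) h0),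
    (Finset.mem_filter.1 hm).2⟩

lemma sum_stepProb_filter_step (hβ₀ : ∀ q, ∑ b, β q b = 1)
    (hβ : ∀ q b, β q b ≠ 0 → b ∈ G.act q s) :
    ∑ s' ∈ Finset.univ.filter (G.Step s), G.stepProb s β s' = 1 := by
  rw [Finset.sum_filter_of_ne fun s' _ h => step_of_stepProb_ne_zero hβ h, sum_stepProb hβ₀]

lemma stepProb_mix (p : G.P) {β₁ β₂ : G.P → G.A → ℝ} {c d : ℝ}
    (hne : ∀ q, q ≠ p → β₁ q = β q ∧ β₂ q = β q)
    (hp : ∀ b, β p b = c * β₁ p b + d * β₂ p b) (s' : G.S) :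
    G.stepProb s β s' = c * G.stepProb s β₁ s' + d * G.stepProb s β₂ s' := by
  simp only [stepProb, Finset.mul_sum, ← Finset.sum_add_distrib]
  refine Finset.sum_congr rfl fun m _ => ?_
  have hsplit : ∀ γ : G.P → G.A → ℝ,
      ∏ q, γ q (m q) = γ p (m p) * ∏ q ∈ Finset.univ.erase p, γ q (m q) :=
    fun γ => (Finset.mul_prod_erase _ _ (Finset.mem_univ p)).symm
  have hrest : ∀ γ : G.P → G.A → ℝ, (∀ q, q ≠ p → γ q = β q) →
      ∏ q ∈ Finset.univ.erase p, γ q (m q) = ∏ q ∈ Finset.univ.erase p, β q (m q) :=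
    fun γ hγ => Finset.prod_congr rfl fun q hq => by rw [hγ q (Finset.ne_of_mem_erase hq)]
  rw [hsplit β, hsplit β₁, hsplit β₂, hrest β₁ fun q hq => (hne q hq).1,
    hrest β₂ fun q hq => (hne q hq).2, hp]
  ring

end StepProb

section CylProb

variable {p : G.P} {σ : G.Strategy p} {τ : G.CoStrategy p} {l : List G.S}
  {β₁ β₂ : G.Mixed p (G.lastS l)} {c d : ℝ}

lemma lastS_append_singleton (m : List G.S) (s : G.S) : G.lastS (m ++ [s]) = s := by
  simp [lastS]

lemma cylProb_nonneg (σv : G.Profile) (m : List G.S) : 0 ≤ G.cylProb σv m :=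
  Finset.prod_nonneg fun _ _ => stepProb_nonneg (fun q b => (σv q _).2.1 b) _

lemma cylProb_append (σv : G.Profile) {m : List G.S} (hm : m ≠ []) (s : G.S) :
    G.cylProb σv (m ++ [s]) =
      G.cylProb σv m * G.stepProb (G.lastS m) (fun q => (σv q m).1) s := by
  obtain ⟨n, hn⟩ : ∃ n, m.length = n + 1 := Nat.exists_eq_succ_of_ne_zero (by simpa using hm)
  have htake : ∀ k ≤ m.length, (m ++ [s]).take k = m.take k :=
    fun k hk => List.take_append_of_le_length hk
  simp only [cylProb, List.length_append, List.length_singleton, hn, Nat.add_sub_cancel,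
    Finset.prod_range_succ]
  congr 1
  · exact Finset.prod_congr rfl fun i hi => by
      rw [Finset.mem_range] at hi
      rw [htake (i + 1) (by omega), htake (i + 2) (by omega)]
  · rw [htake (n + 1) hn.ge, ← hn, List.take_length,
      List.take_of_length_le (by simp [hn]), lastS_append_singleton]

lemma combine_update_of_ne (β : G.Mixed p (G.lastS l)) {k : List G.S} (hk : k ≠ l) (q : G.P) :
    G.combine (σ.update l β) τ q k = G.combine σ τ q k := by
  by_cases hq : q = p
  · subst hq
    simp [Strategy.update_of_ne _ _ hk]
  · simp [combine_of_ne _ _ hq]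

lemma stepProb_combine_update_mix (hcd : c + d = 1)
    (hmix : ∀ b, (σ l).1 b = c * β₁.1 b + d * β₂.1 b) (k : List G.S) (s s' : G.S) :
    G.stepProb s (fun q => (G.combine σ τ q k).1) s' =
      c * G.stepProb s (fun q => (G.combine (σ.update l β₁) τ q k).1) s' +
        d * G.stepProb s (fun q => (G.combine (σ.update l β₂) τ q k).1) s' := by
  by_cases hk : k = l
  · subst hk
    refine stepProb_mix p (fun q hq => ?_) (fun b => ?_) s'
    · simp [combine_of_ne _ _ hq]
    · simpa using hmix b
  · simp only [combine_update_of_ne _ hk]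
    rw [← add_mul, hcd, one_mul]

lemma cylProb_combine_update_mix (hcd : c + d = 1)
    (hmix : ∀ b, (σ l).1 b = c * β₁.1 b + d * β₂.1 b) (m : List G.S) :
    G.cylProb (G.combine σ τ) m =
      c * G.cylProb (G.combine (σ.update l β₁) τ) m +
        d * G.cylProb (G.combine (σ.update l β₂) τ) m := by
  refine Finset.prod_eq_mix_of_eq_off _ hcd (l.length - 1)
    (stepProb_combine_update_mix hcd hmix _ _ _) fun i hi hil => ?_
  -- the prefixes `m.take (i + 1)` have pairwise distinct lengths, so at most one of them is `l`
  have hne : m.take (i + 1) ≠ l := by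
    rintro rfl
    simp only [Finset.mem_range, List.length_take] at hi hil
    omega
  simp only [combine_update_of_ne _ hne, and_self]

lemma outcome_combine_update_subset (hc : 0 < c) (hd : 0 ≤ d) (hcd : c + d = 1)
    (hmix : ∀ b, (σ l).1 b = c * β₁.1 b + d * β₂.1 b) :
    G.Outcome (G.combine (σ.update l β₁) τ) ⊆ G.Outcome (G.combine σ τ) := by
  intro ρ hρ k
  obtain ⟨hhist, hpos⟩ := hρ k
  refine ⟨hhist, ?_⟩
  rw [cylProb_combine_update_mix hcd hmix]
  exact add_pos_of_pos_of_nonneg (mul_pos hc hpos) (mul_nonneg hd (cylProb_nonneg _ _))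

end CylProb

section Cylinders

lemma isHistory_append_iff {l : List G.S} (hl : G.IsHistory l) (s : G.S) :
    G.IsHistory (l ++ [s]) ↔ G.Step (G.lastS l) s := by
  obtain ⟨hhead, hchain : l.IsChain G.Step⟩ := hl
  have hlast : l.getLast? = some (G.lastS l) := by
    have hne : l ≠ [] := by rintro rfl; simp at hhead
    simp [lastS, List.getLast?_eq_some_getLast hne]
  simp only [IsHistory, List.head?_append, hhead, Option.some_or, true_and]
  change (l ++ [s]).IsChain G.Step ↔ _
  simp [List.isChain_append, hchain, hlast]

lemma Cyl_nil : G.Cyl [] = Set.univ := by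
  ext ρ
  simp [Cyl]

lemma Cyl_append_subset (m m' : List G.S) : G.Cyl (m ++ m') ⊆ G.Cyl m := by
  intro ρ h i hi
  have := h i (by rw [List.length_append]; omega)
  rwa [List.getD_append _ _ _ _ hi] at this

lemma Cyl_eq_iUnion_append (m : List G.S) : G.Cyl m = ⋃ s, G.Cyl (m ++ [s]) := by
  refine subset_antisymm (fun ρ h => Set.mem_iUnion.2 ⟨ρ m.length, fun i hi => ?_⟩)
    (Set.iUnion_subset fun s => Cyl_append_subset m [s])
  rcases (Nat.lt_succ_iff.1 (by simpa using hi)).lt_or_eq with hlt | rfl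
  · rw [List.getD_append _ _ _ _ hlt]
    exact h i hlt
  · simp

lemma disjoint_Cyl_append (m : List G.S) {s s' : G.S} (h : s ≠ s') :
    Disjoint (G.Cyl (m ++ [s])) (G.Cyl (m ++ [s'])) := by
  refine Set.disjoint_left.2 fun ρ h₁ h₂ => h ?_
  have e₁ := h₁ m.length (by simp)
  have e₂ := h₂ m.length (by simp)
  simp only [List.getD_append_right _ _ _ _ le_rfl, Nat.sub_self] at e₁ e₂
  exact e₁.symm.trans e₂

lemma measurableSet_Cyl (m : List G.S) : MeasurableSet (G.Cyl m) := by
  have : G.Cyl m =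
      ⋂ i, ⋂ (_ : i < m.length), (fun ρ : G.Run => ρ i) ⁻¹' {m.getD i G.init} := by
    ext ρ
    simp [Cyl]
  rw [this]
  exact MeasurableSet.iInter fun i => MeasurableSet.iInter fun _ =>
    measurable_pi_apply i (MeasurableSpace.measurableSet_top)

lemma isPiSystem_Cyl : IsPiSystem (Set.range G.Cyl) := by
  have nested : ∀ m₁ m₂ : List G.S, m₁.length ≤ m₂.length → (G.Cyl m₁ ∩ G.Cyl m₂).Nonempty →
      G.Cyl m₂ ⊆ G.Cyl m₁ := by
    rintro m₁ m₂ hlen ⟨ρ, h₁, h₂⟩ ρ' hρ' i hi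
    rw [hρ' i (hi.trans_le hlen), ← h₂ i (hi.trans_le hlen), h₁ i hi]
  rintro _ ⟨m₁, rfl⟩ _ ⟨m₂, rfl⟩ hne
  rcases le_total m₁.length m₂.length with h | h
  · exact ⟨m₂, (Set.inter_eq_self_of_subset_right (nested m₁ m₂ h hne)).symm⟩
  · rw [Set.inter_comm] at hne ⊢
    exact ⟨m₁, (Set.inter_eq_self_of_subset_right (nested m₂ m₁ h hne)).symm⟩

lemma generateFrom_Cyl :
    MeasurableSpace.generateFrom (Set.range G.Cyl) =
      (inferInstance : MeasurableSpace G.Run) := by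
  refine le_antisymm (MeasurableSpace.generateFrom_le ?_) ?_
  · rintro _ ⟨m, rfl⟩
    exact measurableSet_Cyl m
  refine iSup_le fun i => MeasurableSpace.comap_le_iff_le_map.2 fun T _ => ?_
  have hpre : (fun ρ : G.Run => ρ i) ⁻¹' T =
      ⋃ (m : List G.S) (_ : m.length = i + 1 ∧ m.getD i G.init ∈ T), G.Cyl m := by
    ext ρ
    simp only [Set.mem_preimage, Set.mem_iUnion, exists_prop]
    refine ⟨fun h => ⟨(List.range (i + 1)).map ρ, ⟨by simp, by simpa using h⟩,
      fun j hj => ?_⟩, fun ⟨m, ⟨hlen, hmem⟩, hρ⟩ => hρ i (by omega) ▸ hmem⟩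
    simp only [List.length_map, List.length_range] at hj
    simp [hj]
  rw [MeasurableSpace.map_def, hpre]
  exact MeasurableSet.iUnion fun m => MeasurableSet.iUnion fun _ =>
    MeasurableSpace.measurableSet_generateFrom ⟨m, rfl⟩

end Cylinders

section Measure

variable {Pr : G.Profile → Measure G.Run}

lemma measure_Cyl_append_eq_zero_of_not_step (hPr : G.ValidPr Pr) (σv : G.Profile)
    {l : List G.S} (hl : G.IsHistory l) {s : G.S} (hs : ¬ G.Step (G.lastS l) s) :
    Pr σv (G.Cyl (l ++ [s])) = 0 := by
  have := hPr.1 σv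
  have hl₀ : l ≠ [] := by rintro rfl; simp [IsHistory] at hl
  -- the one-step extensions of `l` along steps already carry the whole mass of `Cyl l`
  have hsteps : ∑ s' ∈ Finset.univ.filter (G.Step (G.lastS l)), Pr σv (G.Cyl (l ++ [s'])) =
      Pr σv (G.Cyl l) := by
    rw [hPr.2 σv l hl, ← mul_one (G.cylProb σv l), ← sum_stepProb_filter_step
      (fun q => (σv q l).2.2.1) (fun q b hb => (σv q l).2.2.2 b hb), Finset.mul_sum,
      ENNReal.ofReal_sum_of_nonneg fun s' _ =>
        mul_nonneg (cylProb_nonneg σv l) (stepProb_nonneg (fun q b => (σv q l).2.1 b) s')]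
    refine Finset.sum_congr rfl fun s' hs' => ?_
    rw [hPr.2 σv _ ((isHistory_append_iff hl s').2 (Finset.mem_filter.1 hs').2),
      cylProb_append σv hl₀]
  have hall : Pr σv (G.Cyl l) = ∑ s', Pr σv (G.Cyl (l ++ [s'])) := by
    rw [Cyl_eq_iUnion_append l, measure_iUnion (fun _ _ h => disjoint_Cyl_append l h)
      fun _ => measurableSet_Cyl _, tsum_fintype]
  rw [← Finset.sum_filter_add_sum_filter_not Finset.univ (G.Step (G.lastS l)), hsteps] at hall
  have hrest :=
    (ENNReal.add_right_inj (measure_ne_top (Pr σv) _)).1 (hall.symm.trans (add_zero _).symm)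
  exact Finset.sum_eq_zero_iff.1 hrest s (by simp [hs])

lemma measure_Cyl_eq_zero_of_not_isHistory (hPr : G.ValidPr Pr) (σv : G.Profile)
    {m : List G.S} (hm₀ : m ≠ []) (hm : ¬ G.IsHistory m) : Pr σv (G.Cyl m) = 0 := by
  have := hPr.1 σv
  induction m using List.reverseRecOn with
  | nil => exact absurd rfl hm₀
  | append_singleton l s ih =>
    rcases eq_or_ne l [] with rfl | hl₀
    · have hinit : G.IsHistory [G.init] := ⟨rfl, List.isChain_singleton _⟩
      have hs : s ≠ G.init := by rintro rfl; exact hm hinit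
      have hone : Pr σv (G.Cyl [G.init]) = 1 := by
        simp [hPr.2 σv _ hinit, cylProb]
      refine measure_mono_null (Set.disjoint_left.1 (disjoint_Cyl_append [] hs))
        ((prob_compl_eq_zero_iff (measurableSet_Cyl _)).2 hone)
    by_cases hl : G.IsHistory l
    · exact measure_Cyl_append_eq_zero_of_not_step hPr σv hl
        fun h => hm ((isHistory_append_iff hl s).2 h)
    · exact measure_mono_null (Cyl_append_subset l [s]) (ih hl₀ hl)

end Measure

section Dominance

variable {Pr : G.Profile → Measure G.Run} {p : G.P} {σ : G.Strategy p} {l : List G.S}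
  {β₁ β₂ : G.Mixed p (G.lastS l)} {c d : ℝ}

lemma measure_combine_update_mix (hPr : G.ValidPr Pr) (τ : G.CoStrategy p) (hc : 0 ≤ c)
    (hd : 0 ≤ d) (hcd : c + d = 1) (hmix : ∀ b, (σ l).1 b = c * β₁.1 b + d * β₂.1 b) :
    Pr (G.combine σ τ) = ENNReal.ofReal c • Pr (G.combine (σ.update l β₁) τ) +
      ENNReal.ofReal d • Pr (G.combine (σ.update l β₂) τ) := by
  have := hPr.1
  have hCyl : ∀ m, Pr (G.combine σ τ) (G.Cyl m) =
      ENNReal.ofReal c * Pr (G.combine (σ.update l β₁) τ) (G.Cyl m) +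
        ENNReal.ofReal d * Pr (G.combine (σ.update l β₂) τ) (G.Cyl m) := by
    intro m
    by_cases hm : G.IsHistory m
    · rw [hPr.2 _ _ hm, hPr.2 _ _ hm, hPr.2 _ _ hm, cylProb_combine_update_mix hcd hmix,
        ENNReal.ofReal_add (mul_nonneg hc (cylProb_nonneg _ _))
          (mul_nonneg hd (cylProb_nonneg _ _)), ENNReal.ofReal_mul hc, ENNReal.ofReal_mul hd]
    rcases eq_or_ne m [] with rfl | hm₀
    · simp only [Cyl_nil, measure_univ, mul_one, ← ENNReal.ofReal_add hc hd, hcd,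
        ENNReal.ofReal_one]
    · simp only [measure_Cyl_eq_zero_of_not_isHistory hPr _ hm₀ hm, mul_zero, add_zero]
  refine ext_of_generate_finite _ generateFrom_Cyl.symm isPiSystem_Cyl ?_ ?_
  · rintro _ ⟨m, rfl⟩
    simpa using hCyl m
  · simpa [Cyl_nil] using hCyl []

lemma wDom_update_of_mix (hPr : G.ValidPr Pr) (win : G.P → Set G.Run) (st : Sem)
    (hc : 0 < c) (hd : 0 ≤ d) (hcd : c + d = 1)
    (hmix : ∀ b, (σ l).1 b = c * β₁.1 b + d * β₂.1 b) :
    G.WDom Pr win st σ (σ.update l β₁) := by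
  intro τ hwin
  cases st with
  | Sure => exact (outcome_combine_update_subset hc hd hcd hmix).trans hwin
  | Almost =>
    have := hPr.1
    have hsum : ENNReal.ofReal c + ENNReal.ofReal d = 1 := by
      rw [← ENNReal.ofReal_add hc.le hd, hcd, ENNReal.ofReal_one]
    rw [Wins, measure_combine_update_mix hPr τ hc.le hd hcd hmix] at hwin
    exact Measure.apply_eq_one_of_smul_add_apply_eq_one (ENNReal.ofReal_pos.2 hc).ne' hsum hwin

end Dominance

end ConcGame

theorem stmt1_general (G : ConcGame) (win : G.P → Set G.Run)
    (Pr : G.Profile → Measure G.Run) (hPr : G.ValidPr Pr)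
    (st : ConcGame.Sem) (p : G.P) (l : List G.S)
    (α : G.Mixed p (G.lastS l)) (a : G.A) (ha : a ∈ G.Supp α) :
    G.MWDom Pr win st l α (G.dirac p (G.lastS l) a (α.2.2.2 a ha)) := by
  obtain ⟨β, hβ⟩ := α.exists_eq_dirac_mix ha
  have hpos : 0 < α.1 a := (α.2.1 a).lt_of_ne (Ne.symm ha)
  have hle : α.1 a ≤ 1 := α.apply_le_one a
  rintro σ - rfl
  exact ⟨σ.update l _, σ.update_self l _, ConcGame.wDom_update_of_mix hPr win st hpos
    (sub_nonneg.2 hle) (add_sub_cancel _ 1) hβ⟩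

/-- a randomised move is weakly dominated at any history by each Dirac move
in its support. -/
theorem stmt1 (G : ConcGame) (win : G.P → Set G.Run)
    (hwin : ∀ p, MeasurableSet (win p))
    (Pr : G.Profile → Measure G.Run) (hPr : G.ValidPr Pr)
    (st : ConcGame.Sem) (p : G.P) (l : List G.S) (hl : G.IsHistory l)
    (α : G.Mixed p (G.lastS l)) (a : G.A) (ha : a ∈ G.Supp α) :
    G.MWDom Pr win st l α (G.dirac p (G.lastS l) a (α.2.2.2 a ha)) :=
  stmt1_general G win Pr hPr st p l α a ha
end
end

section
/- For every player p and every S-admissible strategy σ ∈ Γ_p, there exists a Dirac strategy σ' ∈ Γ_p (i.e., σ'(h) is a Dirac move for every history h) such that σ ≈^S σ'. -/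
open scoped Classical

noncomputable section

open MeasureTheory

/-
Sure winning only depends on which runs have positive probability, and a history has positive
probability as soon as every action it needs lies in the supports of the moves played. Replacing
each move of `σ` by the Dirac move on one action of its support can therefore only shrink the
outcome against any coalition strategy, so the resulting Dirac strategy weakly dominates `σ`;
since `σ` is admissible, the converse dominance holds as well.
-/

namespace ConcGame

variable {G : ConcGame}

lemma Mixed.supp_nonempty {p : G.P} {s : G.S} (α : G.Mixed p s) : (G.Supp α).Nonempty := by
  by_contra h
  have hzero : ∀ a, α.1 a = 0 := fun a => by
    by_contra ha
    exact h ⟨a, ha⟩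
  simpa [hzero] using α.2.2.1

lemma Mixed.supp_subset_act {p : G.P} {s : G.S} (α : G.Mixed p s) : G.Supp α ⊆ G.act p s :=
  α.2.2.2

lemma supp_dirac (p : G.P) (s : G.S) (a : G.A) (ha : a ∈ G.act p s) :
    G.Supp (G.dirac p s a ha) = {a} := by
  ext b
  by_cases hb : b = a <;> simp [Supp, dirac, hb]

lemma stepProb_pos_of_support_subset {s s' : G.S} {β β' : G.P → G.A → ℝ}
    (hβ : ∀ q a, 0 ≤ β q a) (hsupp : ∀ q, Function.support (β' q) ⊆ Function.support (β q))
    (h : G.stepProb s β' s' ≠ 0) : 0 < G.stepProb s β s' := by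
  obtain ⟨m, hm, hm'⟩ := Finset.exists_ne_zero_of_sum_ne_zero h
  have hterm : 0 < ∏ q, β q (m q) :=
    Finset.prod_pos fun q _ =>
      (hβ q (m q)).lt_of_ne' (hsupp q (Finset.prod_ne_zero_iff.mp hm' q (Finset.mem_univ q)))
  exact hterm.trans_le <|
    Finset.single_le_sum (f := fun m : G.P → G.A => ∏ q, β q (m q))
      (fun m _ => Finset.prod_nonneg fun q _ => hβ q (m q)) hm

lemma cylProb_pos_of_supp_subset {σv σv' : G.Profile}
    (hsupp : ∀ q l, G.Supp (σv' q l) ⊆ G.Supp (σv q l)) {l : List G.S}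
    (h : G.cylProb σv' l ≠ 0) : 0 < G.cylProb σv l :=
  Finset.prod_pos fun i hi =>
    stepProb_pos_of_support_subset (fun q => (σv q _).2.1) (fun q => hsupp q _)
      (Finset.prod_ne_zero_iff.mp h i hi)

lemma outcome_subset_of_supp_subset {σv σv' : G.Profile}
    (hsupp : ∀ q l, G.Supp (σv' q l) ⊆ G.Supp (σv q l)) : G.Outcome σv' ⊆ G.Outcome σv :=
  fun _ hρ k => ⟨(hρ k).1, cylProb_pos_of_supp_subset hsupp (hρ k).2.ne'⟩

lemma supp_combine_subset {p : G.P} {σ σ' : G.Strategy p}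
    (hsupp : ∀ l, G.Supp (σ' l) ⊆ G.Supp (σ l)) (τ : G.CoStrategy p) (q : G.P) (l : List G.S) :
    G.Supp (G.combine σ' τ q l) ⊆ G.Supp (G.combine σ τ q l) := by
  by_cases hq : q = p
  · subst hq
    simpa [combine] using hsupp l
  · simp [combine, hq]

lemma wDom_sure_of_supp_subset (Pr : G.Profile → Measure G.Run) (win : G.P → Set G.Run)
    {p : G.P} {σ σ' : G.Strategy p} (hsupp : ∀ l, G.Supp (σ' l) ⊆ G.Supp (σ l)) :
    G.WDom Pr win Sem.Sure σ σ' :=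
  fun τ hwin => (outcome_subset_of_supp_subset (supp_combine_subset hsupp τ)).trans hwin

lemma Admissible.equivS_of_wDom {Pr : G.Profile → Measure G.Run} {win : G.P → Set G.Run}
    {st : Sem} {p : G.P} {σ σ' : G.Strategy p} (hadm : G.Admissible Pr win st σ)
    (h : G.WDom Pr win st σ σ') : G.EquivS Pr win st σ σ' :=
  ⟨h, not_not.mp fun h' => hadm σ' ⟨h, h'⟩⟩

def Strategy.toDirac {p : G.P} (σ : G.Strategy p) : G.Strategy p := fun l =>
  G.dirac p _ (σ l).supp_nonempty.some ((σ l).supp_subset_act (σ l).supp_nonempty.some_mem)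

lemma Strategy.isDirac_toDirac {p : G.P} (σ : G.Strategy p) (l : List G.S) :
    G.IsDirac (σ.toDirac l) :=
  ⟨(σ l).supp_nonempty.some, by simp [Strategy.toDirac, dirac]⟩

lemma Strategy.supp_toDirac_subset {p : G.P} (σ : G.Strategy p) (l : List G.S) :
    G.Supp (σ.toDirac l) ⊆ G.Supp (σ l) := by
  rw [Strategy.toDirac, supp_dirac, Set.singleton_subset_iff]
  exact (σ l).supp_nonempty.some_mem

end ConcGame

theorem stmt15_general (G : ConcGame) (win : G.P → Set G.Run)
    (Pr : G.Profile → Measure G.Run)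
    (p : G.P) (σ : G.Strategy p)
    (hadm : G.Admissible Pr win ConcGame.Sem.Sure σ) :
    ∃ σ' : G.Strategy p, G.EquivS Pr win ConcGame.Sem.Sure σ σ' ∧
      ∀ l, G.IsHistory l → G.IsDirac (σ' l) :=
  ⟨σ.toDirac,
    hadm.equivS_of_wDom (ConcGame.wDom_sure_of_supp_subset Pr win σ.supp_toDirac_subset),
    fun l _ => σ.isDirac_toDirac l⟩

/-- every S-admissible strategy is equivalent to a Dirac strategy. -/
theorem stmt15 (G : ConcGame) (win : G.P → Set G.Run)
    (hwin : ∀ p, MeasurableSet (win p))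
    (Pr : G.Profile → Measure G.Run) (hPr : G.ValidPr Pr)
    (p : G.P) (σ : G.Strategy p)
    (hadm : G.Admissible Pr win ConcGame.Sem.Sure σ) :
    ∃ σ' : G.Strategy p, G.EquivS Pr win ConcGame.Sem.Sure σ σ' ∧
      ∀ l, G.IsHistory l → G.IsDirac (σ' l) :=
  stmt15_general G win Pr p σ hadm
end
end
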